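/- arXiv:2211.04653 — 3 statements merged into one kernel-verified Lean document; each statement's English description precedes it below -/
import Mathlib

section
/- Let f : ℝⁿ → ℝ be μ-strongly convex (μ > 0) and continuously differentiable, with minimizer x*. For any step size α > 0, the proximal point iteration x^{k+1} = argmin_x f(x) + (1/(2α))‖x - x^k‖² satisfies ‖x^k - x*‖ ≤ (1/(1+αμ))^k ‖x^0 - x*‖. -/
open scoped RealInnerProductSpace

/-- exact proximal point method on a μ-strongly convex function
converges linearly with rate 1/(1+αμ). -/
theorem ppm_strongly_convex
    {n : ℕ} (f : EuclideanSpace ℝ (Fin n) → ℝ)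
    (g : EuclideanSpace ℝ (Fin n) → EuclideanSpace ℝ (Fin n))
    (μ α : ℝ) (hμ : 0 < μ) (hα : 0 < α)
    (hgrad : ∀ z, HasGradientAt f (g z) z)
    (hconv : ∀ x y, f y ≥ f x + ⟪g x, y - x⟫ + μ / 2 * ‖y - x‖ ^ 2)
    (xstar : EuclideanSpace ℝ (Fin n)) (hmin : g xstar = 0)
    (x : ℕ → EuclideanSpace ℝ (Fin n))
    (hiter : ∀ k, x (k + 1) = x k - α • g (x (k + 1))) :
    ∀ k, ‖x k - xstar‖ ≤ (1 / (1 + α * μ)) ^ k * ‖x 0 - xstar‖ := by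
  have hpos : (0:ℝ) < 1 + α * μ := by positivity
  -- strong monotonicity with xstar
  have hmono : ∀ a, μ * ‖a - xstar‖ ^ 2 ≤ ⟪g a, a - xstar⟫ := by
    intro a
    have h1 := hconv a xstar
    have h2 := hconv xstar a
    rw [hmin] at h2
    simp only [inner_zero_left] at h2
    have hnorm : ‖xstar - a‖ = ‖a - xstar‖ := norm_sub_rev _ _
    have hinner : ⟪g a, xstar - a⟫ = -⟪g a, a - xstar⟫ := by
      rw [← inner_neg_right]; congr 1; abel
    rw [hnorm, hinner] at h1
    have hμle : μ / 2 * ‖a - xstar‖ ^ 2 + μ / 2 * ‖a - xstar‖ ^ 2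
        = μ * ‖a - xstar‖ ^ 2 := by ring
    linarith
  -- per-step contraction
  have hstep : ∀ k, (1 + α * μ) * ‖x (k+1) - xstar‖ ≤ ‖x k - xstar‖ := by
    intro k
    set u := x (k+1) - xstar with hu
    set v := x k - xstar with hv
    have huv : u = v - α • g (x (k+1)) := by
      rw [hu, hv]; nth_rewrite 1 [hiter k]; abel
    have hinner : ⟪u, u⟫ = ⟪u, v⟫ - α * ⟪g (x (k+1)), u⟫ := by
      nth_rewrite 2 [huv]
      rw [inner_sub_right, inner_smul_right, real_inner_comm u]
    have hm := hmono (x (k+1))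
    have hcs : ⟪u, v⟫ ≤ ‖u‖ * ‖v‖ := real_inner_le_norm u v
    have hself : ⟪u, u⟫ = ‖u‖ ^ 2 := real_inner_self_eq_norm_sq u
    have key : (1 + α * μ) * ‖u‖ ^ 2 ≤ ‖u‖ * ‖v‖ := by
      nlinarith [hm, hcs, hself, hinner, hα.le]
    rcases eq_or_lt_of_le (norm_nonneg u) with h0 | h0
    · rw [← h0]; simpa using norm_nonneg v
    · nlinarith [key, h0]
  intro k
  induction k with
  | zero => simp
  | succ k ih =>
    have h := hstep k
    have h' : ‖x (k+1) - xstar‖ ≤ (1 / (1 + α * μ)) * ‖x k - xstar‖ := by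
      rw [div_mul_eq_mul_div, le_div_iff₀ hpos]
      linarith
    calc ‖x (k+1) - xstar‖ ≤ (1 / (1 + α * μ)) * ‖x k - xstar‖ := h'
      _ ≤ (1 / (1 + α * μ)) * ((1 / (1 + α * μ)) ^ k * ‖x 0 - xstar‖) := by
          apply mul_le_mul_of_nonneg_left ih; positivity
      _ = (1 / (1 + α * μ)) ^ (k+1) * ‖x 0 - xstar‖ := by ring
end

section
/- For vectors x^{k+1}, ..., x^{k+τ} and coefficients ξ_1, ..., ξ_{τ-1}, we have ‖Σ_{i=1}^{τ-1} ξ_i(x^{k+i} - x^{k+τ})‖² ≤ (τ-1) Σ_{j=1}^{τ-1} c_j ‖x^{k+j} - x^{k+j+1}‖², where c_j = Σ_{i=1}^{j} (τ - i) ξ_i². -/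
/-!
Telescope each difference `x^{k+i} - x^{k+τ}` into the `τ - i` consecutive steps after it and
apply `‖∑ a‖² ≤ n ∑ ‖a‖²` twice, once to the outer sum over `i` and once to each telescoped
sum; exchanging the order of the resulting double sum over `i ≤ j` collects the weight `c_j`
in front of the step `x^{k+j} - x^{k+j+1}`.
-/

open Finset

lemma norm_sum_sq_le_card_mul_sum_norm_sq {ι E : Type*} [SeminormedAddCommGroup E]
    (s : Finset ι) (f : ι → E) :
    ‖∑ i ∈ s, f i‖ ^ 2 ≤ #s * ∑ i ∈ s, ‖f i‖ ^ 2 :=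
  (pow_le_pow_left₀ (norm_nonneg _) (norm_sum_le s f) 2).trans sq_sum_le_card_mul_sum_sq

lemma norm_sub_sq_le_mul_sum_norm_sub_succ_sq {E : Type*} [SeminormedAddCommGroup E]
    (g : ℕ → E) {i n : ℕ} (h : i ≤ n) :
    ‖g i - g n‖ ^ 2 ≤ ((n : ℝ) - i) * ∑ j ∈ Ico i n, ‖g j - g (j + 1)‖ ^ 2 := by
  have telescope : g i - g n = ∑ j ∈ Ico i n, (g j - g (j + 1)) := by
    rw [← neg_sub, ← sum_Ico_sub g h, ← sum_neg_distrib]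
    simp only [neg_sub]
  rw [telescope, ← Nat.cast_sub h, ← Nat.card_Ico]
  exact norm_sum_sq_le_card_mul_sum_norm_sq (Ico i n) _

theorem norm_sum_smul_sub_last_sq_le {E : Type*} [SeminormedAddCommGroup E] [NormedSpace ℝ E]
    (g : ℕ → E) (ξ : ℕ → ℝ) (n : ℕ) :
    ‖∑ i ∈ range n, ξ i • (g i - g n)‖ ^ 2 ≤
      n * ∑ j ∈ range n, (∑ i ∈ range (j + 1), ((n : ℝ) - i) * ξ i ^ 2) *
        ‖g j - g (j + 1)‖ ^ 2 := by
  calc ‖∑ i ∈ range n, ξ i • (g i - g n)‖ ^ 2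
      ≤ (n : ℝ) * ∑ i ∈ range n, ‖ξ i • (g i - g n)‖ ^ 2 := by
        simpa using norm_sum_sq_le_card_mul_sum_norm_sq (range n) _
    _ ≤ (n : ℝ) * ∑ i ∈ range n,
          ξ i ^ 2 * (((n : ℝ) - i) * ∑ j ∈ Ico i n, ‖g j - g (j + 1)‖ ^ 2) := by
        gcongr with i hi
        rw [norm_smul, mul_pow, Real.norm_eq_abs, sq_abs]
        gcongr
        exact norm_sub_sq_le_mul_sum_norm_sub_succ_sq g (mem_range.1 hi).le
    _ = _ := by
        congr 1
        simp only [sum_mul, mul_sum, range_eq_Ico]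
        rw [sum_Ico_Ico_comm]
        refine sum_congr rfl fun i _ => sum_congr rfl fun j _ => ?_
        ring

/-- With 0-based indexing, `ξ i` stands for `ξ_{i+1}` and `c_{j+1} = ∑_{i=1}^{j+1} (τ-i) ξ_i²`. -/
theorem coupling_term_bound_general
    {d : ℕ} (τ : ℕ) (k : ℕ)
    (x : ℕ → EuclideanSpace ℝ (Fin d)) (ξ : ℕ → ℝ) :
    ‖∑ i ∈ Finset.range (τ - 1), ξ i • (x (k + i + 1) - x (k + τ))‖ ^ 2 ≤
      ((τ : ℝ) - 1) * ∑ j ∈ Finset.range (τ - 1),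
        (∑ i ∈ Finset.range (j + 1), ((τ : ℝ) - (i + 1)) * ξ i ^ 2) *
          ‖x (k + j + 1) - x (k + j + 2)‖ ^ 2 := by
  cases τ with
  | zero => simp
  | succ n =>
    have bound := norm_sum_smul_sub_last_sq_le (fun j => x (k + j + 1)) ξ n
    simp only [Nat.add_sub_cancel, Nat.cast_succ, add_sub_cancel_right, add_sub_add_right_eq_sub,
      add_assoc, Nat.reduceAdd] at bound ⊢
    exact bound

/-- bound on the coupling term of multistep methods. With 0-based
indexing, ξ i stands for ξ_{i+1} and c_{j+1} = ∑_{i=1}^{j+1} (τ-i) ξ_i². -/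
theorem coupling_term_bound
    {d : ℕ} (τ : ℕ) (hτ : 2 ≤ τ) (k : ℕ)
    (x : ℕ → EuclideanSpace ℝ (Fin d)) (ξ : ℕ → ℝ) :
    ‖∑ i ∈ Finset.range (τ - 1), ξ i • (x (k + i + 1) - x (k + τ))‖ ^ 2 ≤
      ((τ : ℝ) - 1) * ∑ j ∈ Finset.range (τ - 1),
        (∑ i ∈ Finset.range (j + 1), ((τ : ℝ) - (i + 1)) * ξ i ^ 2) *
          ‖x (k + j + 1) - x (k + j + 2)‖ ^ 2 :=
  coupling_term_bound_general τ k x ξ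
end

section
/- Let f be convex (μ = 0) and L-smooth, bounded below by f(x*). For the exact proximal point method x^{k+1} = x^k - α∇f(x^{k+1}) with any step size α > 0, min_{0 ≤ s ≤ T} ‖∇f(x^{s+1})‖² ≤ (f(x^0) - f(x*))/(αT). -/
open scoped RealInnerProductSpace

/-- exact proximal point method on a convex L-smooth function
bounded below: for any α > 0, min_{0≤s≤T} ‖∇f(x^{s+1})‖² ≤ (f(x⁰)-f(x*))/(αT). -/
theorem ppm_convex_rate
    {d : ℕ} (f : EuclideanSpace ℝ (Fin d) → ℝ)
    (g : EuclideanSpace ℝ (Fin d) → EuclideanSpace ℝ (Fin d))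
    (L α : ℝ) (hL : 0 < L) (hα : 0 < α)
    (hgrad : ∀ z, HasGradientAt f (g z) z)
    (hconv : ∀ a b, f b ≥ f a + ⟪g a, b - a⟫)
    (hsmooth : ∀ a b, ‖g a - g b‖ ≤ L * ‖a - b‖)
    (xstar : EuclideanSpace ℝ (Fin d)) (hbelow : ∀ z, f xstar ≤ f z)
    (x : ℕ → EuclideanSpace ℝ (Fin d))
    (hiter : ∀ k, x (k + 1) = x k - α • g (x (k + 1))) :
    ∀ T : ℕ, 0 < T → ∃ s ≤ T,
      ‖g (x (s + 1))‖ ^ 2 ≤ (f (x 0) - f xstar) / (α * T) := by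
  have step : ∀ k : ℕ, α * ‖g (x (k + 1))‖ ^ 2 ≤ f (x k) - f (x (k + 1)) := by
    intro k
    have h := hconv (x (k + 1)) (x k)
    have hx : x k - x (k + 1) = α • g (x (k + 1)) := by
      nth_rewrite 1 [hiter k]; abel
    rw [hx, real_inner_smul_right, real_inner_self_eq_norm_sq] at h
    nlinarith
  have sum_le : ∀ n : ℕ,
      α * ∑ k ∈ Finset.range n, ‖g (x (k + 1))‖ ^ 2 ≤ f (x 0) - f (x n) := by
    intro n
    induction n with
    | zero => simp
    | succ n ih =>
      rw [Finset.sum_range_succ, mul_add]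
      have := step n
      linarith
  intro T hT
  obtain ⟨s, hs, hmin⟩ := Finset.exists_min_image (Finset.range T)
    (fun k => ‖g (x (k + 1))‖ ^ 2) ⟨0, Finset.mem_range.mpr hT⟩
  refine ⟨s, le_of_lt (Finset.mem_range.mp hs), ?_⟩
  have hcard : (T : ℝ) * ‖g (x (s + 1))‖ ^ 2 ≤
      ∑ k ∈ Finset.range T, ‖g (x (k + 1))‖ ^ 2 := by
    calc (T : ℝ) * ‖g (x (s + 1))‖ ^ 2
        = ∑ _k ∈ Finset.range T, ‖g (x (s + 1))‖ ^ 2 := by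
          rw [Finset.sum_const, Finset.card_range, nsmul_eq_mul]
      _ ≤ ∑ k ∈ Finset.range T, ‖g (x (k + 1))‖ ^ 2 :=
          Finset.sum_le_sum fun k hk => hmin k hk
  have h1 : α * ((T : ℝ) * ‖g (x (s + 1))‖ ^ 2) ≤ f (x 0) - f (x T) :=
    le_trans (by nlinarith [sum_le T]) (sum_le T)
  have h2 : f xstar ≤ f (x T) := hbelow _
  have hT' : (0 : ℝ) < T := by exact_mod_cast hT
  rw [le_div_iff₀ (by positivity)]
  nlinarith
end
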